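/- arXiv:1405.2870 — 3 statements merged into one kernel-verified Lean document; each statement's English description precedes it below -/
import Mathlib

section
/- Let T be an infinite, locally finite tree that is one-ended, and let Q be a locally finite graph obtained from T by identifying vertices (i.e., Q is the quotient of T under an equivalence relation on vertices, with induced adjacency, and Q is locally finite). Then Q is one-ended: for every finite set U ⊂ v(Q), Q − U has exactly one infinite connected component. -/
/-- A locally finite infinite graph is one-ended if removing any finite vertex
set leaves exactly one infinite connected component. -/
def OneEnded {V : Type*} (G : SimpleGraph V) : Prop :=
  ∀ U : Finset V,
    ∃! C : (G.induce ((↑U : Set V)ᶜ)).ConnectedComponent, C.supp.Infinite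

/-!
The quotient map `π` only collapses or preserves edges of `T`, so it maps each component of
`T - π⁻¹ U` into a component of `Q - U`. As `T` is connected and locally finite, `T - π⁻¹ U` has
finitely many components, so its unique infinite component `C` contains all but finitely many
vertices. Since `π` has finite fibres, the component of `Q - U` containing `π '' C` is infinite,
and every infinite component of `Q - U` pulls back to an infinite set, which must meet `C`.
-/

namespace SimpleGraph

variable {V W : Type*} {G : SimpleGraph V} {H : SimpleGraph W} {f : V → W}

theorem Reachable.map_of_adj_imp (hf : ∀ x y, G.Adj x y → f x = f y ∨ H.Adj (f x) (f y))
    {x y : V} (h : G.Reachable x y) : H.Reachable (f x) (f y) := by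
  rw [reachable_iff_reflTransGen] at h ⊢
  refine h.lift' f fun a b hab => show Relation.ReflTransGen H.Adj (f a) (f b) from ?_
  rcases hf a b hab with heq | hadj
  · exact heq ▸ Relation.ReflTransGen.refl
  · exact Relation.ReflTransGen.single hadj

theorem ConnectedComponent.compl_supp_finite [Finite G.ConnectedComponent]
    {C : G.ConnectedComponent} (hC : ∀ D : G.ConnectedComponent, D.supp.Infinite → D = C) :
    C.suppᶜ.Finite := by
  have hcover : C.suppᶜ ⊆ ⋃ D : {D : G.ConnectedComponent // D ≠ C}, D.1.supp :=
    fun v hv => Set.mem_iUnion.2 ⟨⟨G.connectedComponentMk v, hv⟩, rfl⟩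
  exact (Set.finite_iUnion fun D : {D : G.ConnectedComponent // D ≠ C} =>
    Set.not_infinite.1 (mt (hC D.1) D.2)).subset hcover

theorem existsUnique_infinite_supp_of_surjective
    (hf : ∀ x y, G.Adj x y → f x = f y ∨ H.Adj (f x) (f y)) (hsurj : Function.Surjective f)
    (hfib : ∀ w, (f ⁻¹' {w}).Finite) {C : G.ConnectedComponent} (hCinf : C.supp.Infinite)
    (hCcofin : C.suppᶜ.Finite) : ∃! D : H.ConnectedComponent, D.supp.Infinite := by
  obtain ⟨c, hc⟩ := hCinf.nonempty
  have hmaps : ∀ x ∈ C.supp, f x ∈ (H.connectedComponentMk (f c)).supp := fun x hx =>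
    ConnectedComponent.sound ((ConnectedComponent.exact (hx.trans hc.symm)).map_of_adj_imp hf)
  refine ⟨H.connectedComponentMk (f c), fun hfin => ?_, fun D hD => ?_⟩
  · exact hCinf ((hfin.preimage' fun w _ => hfib w).subset hmaps)
  · have hpre : (f ⁻¹' D.supp).Infinite := fun hfin =>
      hD (by simpa [hsurj.image_preimage] using hfin.image f)
    obtain ⟨x, hxD, hxC⟩ := (hpre.sdiff hCcofin).nonempty
    exact hxD.symm.trans (hmaps x (not_not.1 hxC))

end SimpleGraph

open SimpleGraph in
theorem OneEnded.of_surjective {V W : Type*} {G : SimpleGraph V} {H : SimpleGraph W}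
    [G.LocallyFinite] (hG : OneEnded G) (hconn : G.Preconnected) {f : V → W}
    (hf : ∀ x y, G.Adj x y → f x = f y ∨ H.Adj (f x) (f y)) (hsurj : Function.Surjective f)
    (hfib : ∀ w, (f ⁻¹' {w}).Finite) : OneEnded H := by
  intro U
  have := Fact.mk hconn
  set U' := (U.finite_toSet.preimage' fun w _ => hfib w).toFinset
  have hU' : (↑U' : Set V) = f ⁻¹' ↑U := Set.Finite.coe_toFinset _
  have hmaps : Set.MapsTo f (↑U')ᶜ (↑U)ᶜ := fun x hx => by simpa [hU'] using hx
  obtain ⟨C, hCinf, hCuniq⟩ := hG U'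
  have : Finite (G.induce (↑U')ᶜ).ConnectedComponent := componentCompl_finite U'
  refine existsUnique_infinite_supp_of_surjective (f := hmaps.restrict)
    (fun x y hxy => (hf x y hxy).imp Subtype.ext id) ?_ (fun w => ?_) hCinf
    (C.compl_supp_finite hCuniq)
  · refine hmaps.restrict_surjective_iff.2 fun w hw => ?_
    obtain ⟨v, rfl⟩ := hsurj w
    exact ⟨v, by simpa [hU'] using hw, rfl⟩
  · exact ((hfib w).preimage Subtype.val_injective.injOn).subset fun x hx =>
      congrArg Subtype.val hx

theorem quotient_of_one_ended_tree_is_one_ended_general {A B : Type*}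
    (T : SimpleGraph A) (Q : SimpleGraph B)
    (hT : T.IsTree) (hlfT : T.LocallyFinite) (hone : OneEnded T)
    (π : A → B) (hsurj : Function.Surjective π)
    (hfib : ∀ b : B, (π ⁻¹' {b}).Finite)
    (hadj : ∀ u v : B, u ≠ v →
      (Q.Adj u v ↔ ∃ x y : A, T.Adj x y ∧ π x = u ∧ π y = v)) :
    OneEnded Q :=
  hone.of_surjective hT.connected.preconnected
    (fun x y hxy => or_iff_not_imp_left.2 fun hne => (hadj _ _ hne).2 ⟨x, y, hxy, rfl, rfl⟩)
    hsurj hfib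

/-- Let `T` be an infinite, locally finite, one-ended tree and
let `Q` be a locally finite graph obtained from `T` by identifying vertices
(a quotient along a surjection `π` with finite fibers, adjacency being induced
from `T`). Then `Q` is one-ended. -/
theorem quotient_of_one_ended_tree_is_one_ended {A B : Type*} [Infinite A]
    (T : SimpleGraph A) (Q : SimpleGraph B)
    (hT : T.IsTree) (hlfT : T.LocallyFinite) (hone : OneEnded T)
    (π : A → B) (hsurj : Function.Surjective π)
    (hfib : ∀ b : B, (π ⁻¹' {b}).Finite)
    (hadj : ∀ u v : B, u ≠ v →
      (Q.Adj u v ↔ ∃ x y : A, T.Adj x y ∧ π x = u ∧ π y = v))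
    (hlfQ : Q.LocallyFinite) :
    OneEnded Q :=
  quotient_of_one_ended_tree_is_one_ended_general T Q hT hlfT hone π hsurj hfib hadj
end

section
/- Let (H_n)_{1 ≤ n ≤ ∞} be locally finite connected rooted graphs with H_n → H_∞ in the local weak (Benjamini–Schramm) sense, meaning for every r > 0 there exists N such that for all n ≥ N the rooted balls B_{H_n}(ρ_n, r) and B_{H_∞}(ρ_∞, r) are isomorphic as rooted graphs. Suppose H_∞ is recurrent. Fix a finite vertex set D ⊆ v(H_∞) (contained in all H_n for n large, via the ball isomorphisms) and, for each n, a function φ_n: v(H_n) → ℝ harmonic with boundary D, with all φ_n agreeing on D and uniformly bounded. Then for every vertex v of H_∞, φ_n(v) → φ_∞(v) as n → ∞. -/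
open MeasureTheory Finset Filter
open scoped Classical

/-- The process `X` is a simple random walk on the locally finite graph `G`
started at `v`, specified through its finite-dimensional distributions. -/
def SRWLaw {V : Type*} (G : SimpleGraph V)
    (hfin : ∀ v : V, (G.neighborSet v).Finite)
    {Ω : Type*} [MeasureSpace Ω] (X : ℕ → Ω → V) (v : V) : Prop :=
  ∀ (n : ℕ) (f : ℕ → V),
    volume {ω | ∀ i ≤ n, X i ω = f i} =
      if f 0 = v then
        ∏ i ∈ Finset.range n,
          (if G.Adj (f i) (f (i + 1))
            then (((hfin (f i)).toFinset.card : ENNReal))⁻¹ else 0)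
      else 0

/-- A locally finite graph is recurrent if simple random walk (any process
with the simple random walk law) returns to its starting point almost surely. -/
def Recurrent {V : Type*} (G : SimpleGraph V)
    (hfin : ∀ v : V, (G.neighborSet v).Finite) : Prop :=
  ∀ (Ω : Type) (_ : MeasureSpace Ω) (X : ℕ → Ω → V) (v : V),
    IsProbabilityMeasure (volume : Measure Ω) → SRWLaw G hfin X v →
      volume {ω | ∃ n, 0 < n ∧ X n ω = v} = 1

/-- `φ` is harmonic on `G` with boundary `D`. -/
def HarmonicOn {V : Type*} (G : SimpleGraph V)
    (hfin : ∀ v : V, (G.neighborSet v).Finite) (D : Finset V) (φ : V → ℝ) : Prop :=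
  ∀ v ∉ D, φ v = (∑ w ∈ (hfin v).toFinset, φ w) / ((hfin v).toFinset.card : ℝ)

/-!
Write `a_n(u)` for the probability that simple random walk on `H_∞` started at `u` avoids `D` at
times `1, …, n`. Where the balls of radius `R` around `ρ` in `H_m` and `H_∞` agree, the difference
`φ_m - φ_∞` vanishes on `D`, is bounded by `2C` and has the mean-value property off `D`; iterating
the mean-value property `n` times gives `|φ_m v - φ_∞ v| ≤ 2C a_n(v)` whenever
`dist(ρ, v) + n ≤ R`. Recurrence forces `a_n(v) → 0`: the walk from `d ∈ D` returns to `d`, hence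
by the Markov property along a path it hits `d` from every vertex.

To apply `Recurrent`, which speaks about any process with the law of simple random walk, the walk is
realised on `[0, 1)` with Lebesgue measure: the successive base-`deg` digits of `ω` choose the
successive neighbours.
-/

open scoped ENNReal NNReal Topology

noncomputable def digit (d : ℕ) (ω : ℝ) : ℕ := ⌊(d : ℝ) * ω⌋₊

noncomputable def digitShift (d : ℕ) (ω : ℝ) : ℝ := d * ω - digit d ω

noncomputable abbrev uniformIco : Measure ℝ := volume.restrict (Set.Ico 0 1)

instance : IsProbabilityMeasure uniformIco := ⟨by simp⟩

lemma measurable_digit (d : ℕ) : Measurable (digit d) :=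
  Nat.measurable_floor.comp (measurable_const.mul measurable_id)

lemma measurable_digitShift (d : ℕ) : Measurable (digitShift d) :=
  (measurable_const.mul measurable_id).sub (measurable_from_nat.comp (measurable_digit d))

lemma mem_Ico_and_digit_eq_iff {d k : ℕ} (hk : k < d) {ω : ℝ} :
    ω ∈ Set.Ico 0 1 ∧ digit d ω = k ↔ (d : ℝ) * ω - k ∈ Set.Ico 0 1 := by
  have hd : (0 : ℝ) < d := by exact_mod_cast (Nat.zero_le k).trans_lt hk
  have hk' : (k : ℝ) + 1 ≤ d := by exact_mod_cast hk
  simp only [Set.mem_Ico, digit]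
  constructor
  · rintro ⟨⟨h0, -⟩, rfl⟩
    have hdω : 0 ≤ (d : ℝ) * ω := by positivity
    exact ⟨sub_nonneg.2 (Nat.floor_le hdω), by linarith [Nat.lt_floor_add_one ((d : ℝ) * ω)]⟩
  · rintro ⟨h0, h1⟩
    have hω0 : 0 ≤ ω := nonneg_of_mul_nonneg_right (by linarith [k.cast_nonneg (α := ℝ)]) hd
    refine ⟨⟨hω0, ?_⟩, (Nat.floor_eq_iff (by positivity)).2 ⟨by linarith, by linarith⟩⟩
    by_contra! h
    nlinarith

lemma digit_lt {d : ℕ} (hd : 0 < d) {ω : ℝ} (hω : ω ∈ Set.Ico 0 1) : digit d ω < d := by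
  have hd' : (0 : ℝ) < d := by exact_mod_cast hd
  exact (Nat.floor_lt (mul_nonneg hd'.le hω.1)).2 (by nlinarith [hω.2])

lemma volume_preimage_mul_sub {d : ℕ} (hd : 0 < d) (k : ℝ) (B : Set ℝ) :
    volume ((fun ω : ℝ => (d : ℝ) * ω - k) ⁻¹' B) = (d : ℝ≥0∞)⁻¹ * volume B := by
  have hcomp : (fun ω : ℝ => (d : ℝ) * ω - k) = (fun x => x + -k) ∘ (fun x => (d : ℝ) * x) := by
    funext x; simp [sub_eq_add_neg]
  rw [hcomp, Set.preimage_comp, Real.volume_preimage_mul_left (by positivity),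
    measure_preimage_add_right, abs_of_nonneg (by positivity), ENNReal.ofReal_inv_of_pos
    (by exact_mod_cast hd), ENNReal.ofReal_natCast]

/-- Splitting `[0, 1)` into the `d` intervals of its leading digit, each rescaled to `[0, 1)`. -/
lemma uniformIco_digit {d : ℕ} (hd : 0 < d) {A : ℕ → Set ℝ} (hA : ∀ k, MeasurableSet (A k)) :
    uniformIco {ω | digitShift d ω ∈ A (digit d ω)} =
      ∑ k ∈ range d, (d : ℝ≥0∞)⁻¹ * uniformIco (A k) := by
  have hset : {ω | digitShift d ω ∈ A (digit d ω)} ∩ Set.Ico 0 1 =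
      ⋃ k ∈ range d, (fun ω : ℝ => (d : ℝ) * ω - k) ⁻¹' (A k ∩ Set.Ico 0 1) := by
    ext ω
    simp only [Set.mem_inter_iff, Set.mem_ofPred_eq, Set.mem_iUnion, Set.mem_preimage, mem_range,
      exists_prop]
    constructor
    · rintro ⟨hA', hω⟩
      have hk := digit_lt hd hω
      exact ⟨digit d ω, hk, hA', ((mem_Ico_and_digit_eq_iff hk).1 ⟨hω, rfl⟩)⟩
    · rintro ⟨k, hk, hA', hmem⟩
      obtain ⟨hω, rfl⟩ := (mem_Ico_and_digit_eq_iff hk).2 hmem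
      exact ⟨hA', hω⟩
  have hdisj : (range d : Set ℕ).PairwiseDisjoint
      fun k => (fun ω : ℝ => (d : ℝ) * ω - k) ⁻¹' (A k ∩ Set.Ico 0 1) := by
    intro k hk k' hk' hne
    refine Set.disjoint_left.2 fun ω h h' => hne ?_
    rw [← ((mem_Ico_and_digit_eq_iff (mem_range.1 hk)).2 h.2).2,
      ← ((mem_Ico_and_digit_eq_iff (mem_range.1 hk')).2 h'.2).2]
  rw [Measure.restrict_apply' measurableSet_Ico, hset, measure_biUnion_finset hdisj
    fun k _ => ((hA k).inter measurableSet_Ico).preimage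
      ((measurable_const.mul measurable_id).sub measurable_const)]
  refine sum_congr rfl fun k _ => ?_
  rw [volume_preimage_mul_sub hd, Measure.restrict_apply (hA k)]

namespace SimpleGraph

variable {V : Type*} {G : SimpleGraph V} (hfin : ∀ v : V, (G.neighborSet v).Finite)

/-- The probability that simple random walk started at `u` avoids `D` at times `1, …, n`. -/
noncomputable def avoidProb (D : Finset V) : ℕ → V → ℝ≥0
  | 0, _ => 1
  | n + 1, u => (∑ w ∈ (hfin u).toFinset, if w ∈ D then 0 else avoidProb D n w) /
      #(hfin u).toFinset

variable {hfin} {D : Finset V}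

@[simp] lemma avoidProb_zero (u : V) : avoidProb hfin D 0 u = 1 := rfl

lemma avoidProb_succ (n : ℕ) (u : V) :
    avoidProb hfin D (n + 1) u =
      (∑ w ∈ (hfin u).toFinset, if w ∈ D then 0 else avoidProb hfin D n w) /
        #(hfin u).toFinset := rfl

lemma avoidProb_anti_of_subset {D' : Finset V} (h : D ⊆ D') :
    ∀ n u, avoidProb hfin D' n u ≤ avoidProb hfin D n u
  | 0, _ => le_rfl
  | n + 1, u => by
    rw [avoidProb_succ, avoidProb_succ]
    gcongr with w
    by_cases hw' : w ∈ D'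
    · simp [hw']
    · simpa [hw', mt (@h w) hw'] using avoidProb_anti_of_subset h n w

lemma avoidProb_le_card_mul_avoidProb_succ {u w : V} (hadj : G.Adj u w) (hw : w ∉ D) (n : ℕ) :
    avoidProb hfin D n w ≤ #(hfin u).toFinset * avoidProb hfin D (n + 1) u := by
  have hmem : w ∈ (hfin u).toFinset := (hfin u).mem_toFinset.mpr hadj
  have hcard : (#(hfin u).toFinset : ℝ≥0) ≠ 0 := by
    exact_mod_cast (Finset.card_pos.mpr ⟨w, hmem⟩).ne'
  rw [avoidProb_succ, mul_div_cancel₀ _ hcard]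
  simpa [hw] using Finset.single_le_sum (f := fun w => if w ∈ D then 0 else avoidProb hfin D n w)
    (fun _ _ => zero_le) hmem

lemma tendsto_avoidProb_of_adj {u w : V} (hadj : G.Adj u w) (hw : w ∉ D)
    (hu : Tendsto (fun n => avoidProb hfin D n u) atTop (𝓝 0)) :
    Tendsto (fun n => avoidProb hfin D n w) atTop (𝓝 0) := by
  have hlim := ((hu.comp (tendsto_add_atTop_nat 1)).const_mul (#(hfin u).toFinset : ℝ≥0))
  rw [mul_zero] at hlim
  exact tendsto_of_tendsto_of_tendsto_of_le_of_le tendsto_const_nhds hlim (fun _ => zero_le)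
    (avoidProb_le_card_mul_avoidProb_succ hadj hw)

lemma tendsto_avoidProb_singleton (hconn : G.Preconnected) {d : V}
    (hd : Tendsto (fun n => avoidProb hfin {d} n d) atTop (𝓝 0)) (v : V) :
    Tendsto (fun n => avoidProb hfin {d} n v) atTop (𝓝 0) := by
  suffices h : ∀ {u w : V}, G.Walk u w → Tendsto (fun n => avoidProb hfin {d} n u) atTop (𝓝 0) →
      Tendsto (fun n => avoidProb hfin {d} n w) atTop (𝓝 0) from
    h (hconn d v).some hd
  intro u w p hu
  induction p with
  | nil => exact hu
  | @cons u w v hadj _ ih =>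
    by_cases hw : w = d
    · exact ih (hw ▸ hd)
    · exact ih (tendsto_avoidProb_of_adj hadj (by simpa using hw) hu)

lemma abs_le_mul_avoidProb (hconn : G.Connected) {ψ : V → ℝ} {M : ℝ} (hM : ∀ u, |ψ u| ≤ M)
    (hD : ∀ d ∈ D, ψ d = 0) {ρ : V} {R : ℕ}
    (hψ : ∀ u ∉ D, G.dist ρ u ≤ R →
      ψ u = (∑ w ∈ (hfin u).toFinset, ψ w) / #(hfin u).toFinset) :
    ∀ k u, G.dist ρ u + k ≤ R → |ψ u| ≤ M * avoidProb hfin D k u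
  | 0, u, _ => by simpa using hM u
  | k + 1, u, hu => by
    by_cases huD : u ∈ D
    · rw [hD u huD, abs_zero]
      exact mul_nonneg ((abs_nonneg _).trans (hM u)) (NNReal.coe_nonneg _)
    have hnbr : ∀ w ∈ (hfin u).toFinset,
        |ψ w| ≤ M * ((if w ∈ D then 0 else avoidProb hfin D k w : ℝ≥0) : ℝ) := by
      intro w hw
      by_cases hwD : w ∈ D
      · simp only [hD w hwD, if_pos hwD, abs_zero, NNReal.coe_zero, mul_zero, le_refl]
      · have hρw : G.dist ρ w ≤ G.dist ρ u + 1 :=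
          (hconn.dist_triangle).trans (by
            rw [dist_eq_one_iff_adj.mpr ((hfin u).mem_toFinset.mp hw)])
        simpa [hwD] using abs_le_mul_avoidProb hconn hM hD hψ k w (by omega)
    rw [hψ u huD (by omega), avoidProb_succ, NNReal.coe_div, NNReal.coe_sum, NNReal.coe_natCast,
      abs_div, Nat.abs_cast, ← mul_div_assoc, mul_sum]
    gcongr
    exact (abs_sum_le_sum_abs _ _).trans (sum_le_sum hnbr)

variable (hfin) in
/-- An enumeration of the neighbours of `u`, with junk value `u` past the degree. -/
noncomputable def neighborEnum (u : V) (k : ℕ) : V :=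
  if h : k < #(hfin u).toFinset then (hfin u).toFinset.equivFin.symm ⟨k, h⟩ else u

variable (hfin) in
/-- Simple random walk on `[0, 1)` with Lebesgue measure: the leading base-`deg u` digit of `ω`
chooses the next vertex, and the remaining digits drive the rest of the walk. -/
noncomputable def digitWalk : V → ℕ → ℝ → V
  | u, 0, _ => u
  | u, n + 1, ω =>
    digitWalk (neighborEnum hfin u (digit #(hfin u).toFinset ω)) n
      (digitShift #(hfin u).toFinset ω)

lemma sum_range_neighborEnum {M : Type*} [AddCommMonoid M] (u : V) (g : V → M) :
    ∑ k ∈ range #(hfin u).toFinset, g (neighborEnum hfin u k) = ∑ w ∈ (hfin u).toFinset, g w := by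
  rw [sum_range, ← sum_coe_sort (hfin u).toFinset, ← Equiv.sum_comp (hfin u).toFinset.equivFin.symm]
  simp [neighborEnum]

lemma measurableSet_digitWalk_preimage (u : V) (n : ℕ) (s : Set V) :
    MeasurableSet (digitWalk hfin u n ⁻¹' s) := by
  induction n generalizing u with
  | zero => exact MeasurableSet.const (u ∈ s)
  | succ n ih =>
    have hset : digitWalk hfin u (n + 1) ⁻¹' s = ⋃ k : ℕ, digit #(hfin u).toFinset ⁻¹' {k} ∩
        digitShift #(hfin u).toFinset ⁻¹' (digitWalk hfin (neighborEnum hfin u k) n ⁻¹' s) := by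
      ext ω
      simp [digitWalk]
    rw [hset]
    exact MeasurableSet.iUnion fun k =>
      (measurable_digit _ (measurableSet_singleton k)).inter (measurable_digitShift _ (ih _))

/-- The Markov property at time `1`. -/
lemma uniformIco_digitWalk_succ {u : V} (hu : 0 < #(hfin u).toFinset) (P : (ℕ → V) → Prop)
    (hP : ∀ w, MeasurableSet {ω | P fun i => digitWalk hfin w i ω}) :
    uniformIco {ω | P fun i => digitWalk hfin u (i + 1) ω} =
      ∑ w ∈ (hfin u).toFinset,
        (#(hfin u).toFinset : ℝ≥0∞)⁻¹ * uniformIco {ω | P fun i => digitWalk hfin w i ω} := by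
  rw [← sum_range_neighborEnum u]
  exact uniformIco_digit hu fun k => hP _

lemma measurableSet_setOf_forall_digitWalk_mem (u : V) (q : ℕ → Prop) (g : ℕ → ℕ)
    (s : ℕ → Set V) : MeasurableSet {ω | ∀ i, q i → digitWalk hfin u (g i) ω ∈ s i} := by
  simp only [Set.ofPred_forall]
  exact MeasurableSet.iInter fun i => MeasurableSet.iInter fun _ =>
    measurableSet_digitWalk_preimage u (g i) (s i)

theorem srwLaw_digitWalk (hpos : ∀ u, 0 < #(hfin u).toFinset) (u : V) :
    @SRWLaw V G hfin ℝ ⟨uniformIco⟩ (digitWalk hfin u) u := by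
  intro n f
  change uniformIco _ = _
  induction n generalizing u f with
  | zero =>
    by_cases h : f 0 = u
    · simp [h, digitWalk]
    · simp [h, Ne.symm h, digitWalk]
  | succ n ih =>
    by_cases h0 : f 0 = u
    · subst h0
      have hset : {ω | ∀ i ≤ n + 1, digitWalk hfin (f 0) i ω = f i} =
          {ω | (fun p : ℕ → V => ∀ i ≤ n, p i = f (i + 1))
            fun i => digitWalk hfin (f 0) (i + 1) ω} := by
        ext ω
        simp only [Set.mem_ofPred_eq, ← Nat.lt_succ_iff, Nat.forall_lt_succ_left]
        simp [digitWalk]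
      rw [hset, uniformIco_digitWalk_succ (hpos (f 0)) (fun p => ∀ i ≤ n, p i = f (i + 1))
        fun w => measurableSet_setOf_forall_digitWalk_mem w (· ≤ n) id fun i => {f (i + 1)}]
      simp_rw [ih _ (fun i => f (i + 1))]
      simp only [if_true, prod_range_succ', mul_ite, mul_zero, zero_add, sum_ite_eq,
        Set.Finite.mem_toFinset, mem_neighborSet]
      split_ifs <;> simp [mul_comm]
    · have hempty : {ω | ∀ i ≤ n + 1, digitWalk hfin u i ω = f i} = ∅ :=
        Set.eq_empty_of_forall_notMem fun ω hω => h0 (hω 0 (Nat.zero_le _)).symm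
      rw [if_neg h0, hempty, measure_empty]

lemma uniformIco_digitWalk_avoid (hpos : ∀ u, 0 < #(hfin u).toFinset) (D : Finset V) :
    ∀ n u, uniformIco {ω | ∀ i < n, digitWalk hfin u (i + 1) ω ∉ D} = avoidProb hfin D n u
  | 0, u => by simp
  | n + 1, u => by
    have hstep : ∀ w, uniformIco {ω | ∀ i < n + 1, digitWalk hfin w i ω ∉ D} =
        ((if w ∈ D then 0 else avoidProb hfin D n w : ℝ≥0) : ℝ≥0∞) := by
      intro w
      have hset : {ω | ∀ i < n + 1, digitWalk hfin w i ω ∉ D} =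
          {ω | w ∉ D ∧ ∀ i < n, digitWalk hfin w (i + 1) ω ∉ D} := by
        ext ω
        simp only [Set.mem_ofPred_eq, Nat.forall_lt_succ_left]
        rfl
      rw [hset]
      by_cases hw : w ∈ D
      · simp [hw]
      · simpa [hw] using uniformIco_digitWalk_avoid hpos D n w
    have hcard : (#(hfin u).toFinset : ℝ≥0) ≠ 0 := by exact_mod_cast (hpos u).ne'
    rw [uniformIco_digitWalk_succ (hpos u) (fun p => ∀ i < n + 1, p i ∉ D)
      fun w => measurableSet_setOf_forall_digitWalk_mem w (· < n + 1) id fun _ => (↑D)ᶜ]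
    simp_rw [hstep]
    rw [avoidProb_succ, ENNReal.coe_div hcard, ENNReal.ofNNReal_finsetSum, ENNReal.coe_natCast,
      div_eq_mul_inv, sum_mul]
    exact sum_congr rfl fun w _ => mul_comm _ _

lemma Connected.card_toFinset_neighborSet_pos [Nontrivial V] (hconn : G.Connected) (u : V) :
    0 < #(hfin u).toFinset := by
  obtain ⟨w, hw⟩ := exists_ne u
  exact Finset.card_pos.2
    ((hfin u).toFinset_nonempty.2 ((hconn u w).nonempty_neighborSet_left hw.symm))

end SimpleGraph

section Recurrent

open SimpleGraph

variable {V : Type*} {G : SimpleGraph V} {hfin : ∀ v : V, (G.neighborSet v).Finite}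

theorem Recurrent.tendsto_avoidProb_self (hrec : Recurrent G hfin)
    (hpos : ∀ u, 0 < #(hfin u).toFinset) (d : V) :
    Tendsto (fun n => avoidProb hfin {d} n d) atTop (𝓝 0) := by
  have hret : uniformIco {ω | ∃ n, 0 < n ∧ digitWalk hfin d n ω = d} = 1 :=
    hrec ℝ ⟨uniformIco⟩ (digitWalk hfin d) d (inferInstanceAs (IsProbabilityMeasure uniformIco))
      (srwLaw_digitWalk hpos d)
  set S : ℕ → Set ℝ := fun n => {ω | ∀ i < n, digitWalk hfin d (i + 1) ω ∉ ({d} : Finset V)}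
  have hS : ∀ n, MeasurableSet (S n) := fun n =>
    measurableSet_setOf_forall_digitWalk_mem d (· < n) (· + 1) fun _ => (↑({d} : Finset V))ᶜ
  have hreturn : {ω | ∃ n, 0 < n ∧ digitWalk hfin d n ω = d} = (⋂ n, S n)ᶜ := by
    ext ω
    simp only [S, Set.mem_ofPred_eq, Set.mem_compl_iff, Set.mem_iInter, mem_singleton, not_forall,
      not_not]
    constructor
    · rintro ⟨n, hn, hd⟩
      obtain ⟨i, rfl⟩ := Nat.exists_eq_add_one.2 hn
      exact ⟨i + 1, i, lt_add_one i, hd⟩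
    · rintro ⟨_, i, _, hd⟩
      exact ⟨i + 1, i.succ_pos, hd⟩
  rw [hreturn, prob_compl_eq_one_iff (MeasurableSet.iInter hS)] at hret
  have hlim := tendsto_measure_iInter_atTop (μ := uniformIco) (fun n => (hS n).nullMeasurableSet)
    (fun m n hmn ω hω i hi => hω i (hi.trans_le hmn)) ⟨0, measure_ne_top _ _⟩
  rw [hret] at hlim
  simp only [S, Function.comp_def, uniformIco_digitWalk_avoid hpos] at hlim
  exact ENNReal.tendsto_coe.1 hlim

theorem Recurrent.tendsto_avoidProb [Nontrivial V] (hrec : Recurrent G hfin)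
    (hconn : G.Connected) {D : Finset V} {d : V} (hd : d ∈ D) (v : V) :
    Tendsto (fun n => avoidProb hfin D n v) atTop (𝓝 0) :=
  tendsto_of_tendsto_of_tendsto_of_le_of_le tendsto_const_nhds
    (tendsto_avoidProb_singleton hconn.preconnected
      (hrec.tendsto_avoidProb_self hconn.card_toFinset_neighborSet_pos d) v)
    (fun _ => zero_le) (fun n => avoidProb_anti_of_subset (singleton_subset_iff.2 hd) n v)

end Recurrent

lemma HarmonicOn.sub_eq_average {V : Type*} {G G' : SimpleGraph V}
    {hfin : ∀ v : V, (G.neighborSet v).Finite} {hfin' : ∀ v : V, (G'.neighborSet v).Finite}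
    {D : Finset V} {φ φ' : V → ℝ} (hφ : HarmonicOn G hfin D φ) (hφ' : HarmonicOn G' hfin' D φ')
    {u : V} (hu : u ∉ D) (hnbr : ∀ w, G'.Adj u w ↔ G.Adj u w) :
    φ' u - φ u = (∑ w ∈ (hfin u).toFinset, (φ' w - φ w)) / #(hfin u).toFinset := by
  have hset : (hfin' u).toFinset = (hfin u).toFinset := by ext w; simp [hnbr]
  rw [hφ u hu, hφ' u hu, hset, sum_sub_distrib, sub_div]

lemma tendsto_of_forall_eventually_dist_le {α β : Type*} [PseudoMetricSpace α] {l : Filter β}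
    {f : β → α} {a : α} {g : ℕ → ℝ} (hg : Tendsto g atTop (𝓝 0))
    (h : ∀ n, ∀ᶠ m in l, dist (f m) a ≤ g n) : Tendsto f l (𝓝 a) :=
  Metric.tendsto_nhds.2 fun ε hε => by
    obtain ⟨n, hn⟩ := (hg.eventually (gt_mem_nhds hε)).exists
    exact (h n).mono fun m hm => hm.trans_lt hn

/-- Let `(H_n)_{1 ≤ n ≤ ∞}` (indexed here by `ℕ∞`, with `⊤`
playing the role of `∞`) be locally finite connected rooted graphs converging
to `H_∞` in the local weak sense (for every radius `r`, the rooted `r`-balls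
eventually agree), with `H_∞` recurrent. Let `D` be a finite vertex set and
`φ_n` harmonic on `H_n` with boundary `D`, all agreeing on `D` and uniformly
bounded. Then `φ_n → φ_∞` pointwise. -/
theorem harmonic_functions_converge {V : Type*}
    (H : ℕ∞ → SimpleGraph V) (ρ : V)
    (hfin : ∀ n : ℕ∞, ∀ v : V, ((H n).neighborSet v).Finite)
    (hconn : ∀ n : ℕ∞, (H n).Connected)
    (hconv : ∀ r : ℕ, ∃ N : ℕ, ∀ n : ℕ, N ≤ n → ∀ u w : V,
      (H ⊤).dist ρ u ≤ r → ((H (n : ℕ∞)).Adj u w ↔ (H ⊤).Adj u w))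
    (hrec : Recurrent (H ⊤) (hfin ⊤))
    (D : Finset V) (hD : D.Nonempty)
    (φ : ℕ∞ → V → ℝ)
    (hharm : ∀ n : ℕ∞, HarmonicOn (H n) (hfin n) D (φ n))
    (hagree : ∀ n : ℕ∞, ∀ d ∈ D, φ n d = φ ⊤ d)
    (hbdd : ∃ C : ℝ, ∀ (n : ℕ∞) (v : V), |φ n v| ≤ C) :
    ∀ v : V, Tendsto (fun n : ℕ => φ (n : ℕ∞) v) atTop (nhds (φ ⊤ v)) := by
  intro v
  by_cases hv : v ∈ D
  · simp only [hagree _ v hv]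
    exact tendsto_const_nhds
  obtain ⟨C, hC⟩ := hbdd
  obtain ⟨d, hd⟩ := hD
  have : Nontrivial V := ⟨⟨v, d, fun h => hv (h ▸ hd)⟩⟩
  have hlim := (NNReal.tendsto_coe.2 (hrec.tendsto_avoidProb (hconn ⊤) hd v)).const_mul (2 * C)
  rw [NNReal.coe_zero, mul_zero] at hlim
  refine tendsto_of_forall_eventually_dist_le hlim fun n => ?_
  obtain ⟨N, hN⟩ := hconv ((H ⊤).dist ρ v + n)
  filter_upwards [eventually_ge_atTop N] with m hm
  rw [Real.dist_eq]
  exact SimpleGraph.abs_le_mul_avoidProb (hconn ⊤)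
    (fun u => (abs_sub _ _).trans (by linarith [hC m u, hC ⊤ u]))
    (fun d hd => sub_eq_zero.2 (hagree m d hd))
    (fun u hu hρu => (hharm ⊤).sub_eq_average (hharm m) hu fun w => hN m hm u w hρu) n v le_rfl
end

section
/- Let G be a finite 3-connected planar map embedded in the plane, with root edge st, and let ℓ: v(G) → {horizontal segments of the squaring S(G)} assign to each vertex its associated horizontal line segment (at height equal to its potential). Then for every vertex v, the segment ℓ(v) is non-degenerate (has positive length). Equivalently: in a 3-connected planar network with unit potential between s and t, positive current flows through every vertex. -/
/-!
Suppose `ℓ v` is a single point `z`. Two non-degenerate segments through `z` cannot extend to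
the same side of `z`, as they would then overlap in more than a point; so at most two vertices
have non-degenerate segments through `z`. Deleting them leaves a connected graph, and across each
of its edges the property "the segment passes through `z`" propagates, since such a segment is
then degenerate, i.e. equal to `{z}`. Hence every segment passes through `z`, including those of
`s` and `t`, which lie at the different heights `1` and `0`.
-/

namespace Set

variable {α ι : Type*} [LinearOrder α] {S : ι → Set α}

theorem eq_of_mem_of_lt_mem_of_lt_mem (hS : ∀ i, (S i).OrdConnected)
    (hinter : Pairwise fun i j => (S i ∩ S j).Subsingleton) {x : α} {i j : ι} (hi : x ∈ S i)
    (hj : x ∈ S j) {y z : α} (hy : y ∈ S i) (hz : z ∈ S j) (hxy : x < y) (hxz : x < z) :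
    i = j := by
  by_contra hne
  have hmin : min y z ∈ S i ∩ S j :=
    ⟨(hS i).out hi hy ⟨le_min hxy.le hxz.le, min_le_left y z⟩,
      (hS j).out hj hz ⟨le_min hxy.le hxz.le, min_le_right y z⟩⟩
  exact (lt_min hxy hxz).ne (hinter hne ⟨hi, hj⟩ hmin)

theorem encard_setOf_mem_nontrivial_le_two (hS : ∀ i, (S i).OrdConnected)
    (hinter : Pairwise fun i j => (S i ∩ S j).Subsingleton) (x : α) :
    {i | x ∈ S i ∧ (S i).Nontrivial}.encard ≤ 2 := by
  let rightOf : ι → Prop := fun i => ∃ y ∈ S i, x < y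
  have hleft (k : ι) (hk : (S k).Nontrivial) (hk' : ¬ rightOf k) : ∃ y ∈ S k, y < x := by
    obtain ⟨y, hy, hyx⟩ := hk.exists_ne x
    exact ⟨y, hy, hyx.lt_of_le (not_lt.1 fun h => hk' ⟨y, hy, h⟩)⟩
  have hinj : InjOn rightOf {i | x ∈ S i ∧ (S i).Nontrivial} := by
    rintro i ⟨hi, hiS⟩ j ⟨hj, hjS⟩ hij
    by_cases hright : rightOf i
    · obtain ⟨y, hy, hxy⟩ := hright
      obtain ⟨z, hz, hxz⟩ : rightOf j := hij ▸ ⟨y, hy, hxy⟩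
      exact eq_of_mem_of_lt_mem_of_lt_mem hS hinter hi hj hy hz hxy hxz
    · obtain ⟨y, hy, hyx⟩ := hleft i hiS hright
      obtain ⟨z, hz, hzx⟩ := hleft j hjS (hij ▸ hright)
      exact eq_of_mem_of_lt_mem_of_lt_mem (α := αᵒᵈ) (fun k => (hS k).dual) hinter
        hi hj hy hz hyx hzx
  calc _ ≤ (univ : Set Prop).encard := encard_le_encard_of_injOn (mapsTo_univ _ _) hinj
    _ = 2 := by simp

theorem encard_setOf_mem_nontrivial_le_two_of_horizontal {β : Type*} [Preorder β]
    {ℓ : ι → Set (α × β)} (hℓ : ∀ i, (ℓ i).OrdConnected)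
    (hflat : ∀ i, ∀ p ∈ ℓ i, ∀ q ∈ ℓ i, p.2 = q.2)
    (hinter : Pairwise fun i j => (ℓ i ∩ ℓ j).Subsingleton) (z : α × β) :
    {i | z ∈ ℓ i ∧ (ℓ i).Nontrivial}.encard ≤ 2 := by
  let f : α → α × β := fun a => (a, z.2)
  have hf : Function.Injective f := fun a b h => congrArg Prod.fst h
  refine le_trans (encard_le_encard ?_) (encard_setOf_mem_nontrivial_le_two
    (S := fun i => f ⁻¹' ℓ i) (fun i => (hℓ i).preimage_mono fun a b hab => ⟨hab, le_rfl⟩)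
    (fun i j hij => (hinter hij).preimage hf) z.1)
  rintro i ⟨hz, hnt⟩
  refine ⟨hz, ?_⟩
  have hrange : ℓ i ⊆ range f := fun p hp => ⟨p.1, Prod.ext rfl (hflat i z hz p hp)⟩
  exact nontrivial_of_image f _ (by rwa [image_preimage_eq_of_subset hrange])

end Set

theorem SimpleGraph.Reachable.mem_of_forall_adj {V : Type*} {G : SimpleGraph V} {Q : Set V}
    (hQ : ∀ ⦃u w⦄, G.Adj u w → u ∈ Q → w ∈ Q) {u w : V} (h : G.Reachable u w) (hu : u ∈ Q) :
    w ∈ Q := by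
  obtain ⟨p⟩ := h
  induction p with
  | nil => exact hu
  | cons hadj _ ih => exact ih (hQ hadj hu)

theorem SimpleGraph.forall_mem_of_induce_compl_connected {V : Type*} {G : SimpleGraph V}
    {k : ℕ} (hG : ∀ C : Finset V, C.card ≤ k → (G.induce ((↑C : Set V)ᶜ)).Connected)
    {A : Set V} (hA : A.encard ≤ k) {Q : Set V}
    (hQ : ∀ ⦃u w⦄, G.Adj u w → u ∉ A → w ∉ A → u ∈ Q → w ∈ Q) {v : V} (hv : v ∉ A)
    (hvQ : v ∈ Q) : ∀ w ∉ A, w ∈ Q := by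
  intro w hw
  obtain ⟨C, rfl⟩ : ∃ C : Finset V, ↑C = A :=
    ⟨(Set.finite_of_encard_le_coe hA).toFinset, Set.Finite.coe_toFinset _⟩
  exact ((hG C (by exact_mod_cast hA)).preconnected ⟨v, hv⟩ ⟨w, hw⟩).mem_of_forall_adj
    (Q := Subtype.val ⁻¹' Q) (fun a b hab => hQ (u := a) (w := b) hab a.2 b.2) hvQ

theorem three_connected_lines_nondegenerate_general {V : Type*}
    (G : SimpleGraph V)
    (h3 : ∀ A : Finset V, A.card ≤ 2 → (G.induce ((↑A : Set V)ᶜ)).Connected)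
    (s t : V) (P : V → ℝ)
    (hPs : P s = 1) (hPt : P t = 0)
    (ℓ : V → Set (ℝ × ℝ))
    (hseg : ∀ v, ∃ x₁ x₂ : ℝ, x₁ ≤ x₂ ∧ ℓ v = Set.Icc ((x₁, P v)) ((x₂, P v)))
    (hinter : ∀ u v : V, u ≠ v → (ℓ u ∩ ℓ v).Subsingleton)
    (hedge : ∀ u v : V, G.Adj u v → ∀ z : ℝ × ℝ, ℓ u = {z} → z ∈ ℓ v) :
    ∀ v, ¬ (ℓ v).Subsingleton := by
  intro v hv
  have hheight : ∀ u, ∀ p ∈ ℓ u, p.2 = P u := by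
    intro u p hp
    obtain ⟨x₁, x₂, -, hu⟩ := hseg u
    rw [hu] at hp
    exact le_antisymm hp.2.2 hp.1.2
  obtain ⟨z, hz⟩ : (ℓ v).Nonempty := by
    obtain ⟨x₁, x₂, hx, hv⟩ := hseg v
    exact hv ▸ Set.nonempty_Icc.2 (Prod.mk_le_mk.2 ⟨hx, le_rfl⟩)
  have hcut : {u | z ∈ ℓ u ∧ (ℓ u).Nontrivial}.encard ≤ 2 :=
    Set.encard_setOf_mem_nontrivial_le_two_of_horizontal
      (fun u => by obtain ⟨_, _, -, hu⟩ := hseg u; exact hu ▸ Set.ordConnected_Icc)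
      (fun u p hp q hq => (hheight u p hp).trans (hheight u q hq).symm) hinter z
  have hz_all (u : V) : z ∈ ℓ u := by
    by_cases hu : z ∈ ℓ u ∧ (ℓ u).Nontrivial
    · exact hu.1
    refine G.forall_mem_of_induce_compl_connected h3 hcut (Q := {w | z ∈ ℓ w})
      (fun a b hab ha _ hza => hedge a b hab z ?_) (fun h => h.2.not_subsingleton hv) hz u hu
    exact (Set.not_nontrivial_iff.1 fun h => ha ⟨hza, h⟩).eq_singleton_of_mem hza
  have hst : P s = P t := (hheight s z (hz_all s)).symm.trans (hheight t z (hz_all t))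
  rw [hPs, hPt] at hst
  exact one_ne_zero hst

/-- Let `G` be a finite `3`-connected planar map with root
edge `st`, harmonic potential `P` (`P s = 1`, `P t = 0`), and let
`ℓ v` be the horizontal line segment at height `P v` which vertex `v` receives
in the squaring `S(G)`. The geometric structure of the squaring is encoded by
the hypotheses: each `ℓ v` is a (possibly degenerate) horizontal closed
segment at height `P v`; distinct lines meet in at most one point; if `ℓ u`
degenerates to a point `z` then `z` belongs to the line of every neighbour of
`u`; and the lines of `s` and `t` (the sides of the rectangle) are
non-degenerate. Then every segment `ℓ v` is non-degenerate, i.e. positive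
current flows through every vertex. -/
theorem three_connected_lines_nondegenerate {V : Type*} [Fintype V] [DecidableEq V]
    (G : SimpleGraph V) [DecidableRel G.Adj] (hconn : G.Connected)
    (h3 : ∀ A : Finset V, A.card ≤ 2 → (G.induce ((↑A : Set V)ᶜ)).Connected)
    (s t : V) (hst : G.Adj s t) (P : V → ℝ)
    (hPs : P s = 1) (hPt : P t = 0)
    (hharm : ∀ v, v ≠ s → v ≠ t →
      P v = (∑ w ∈ G.neighborFinset v, P w) / (G.degree v : ℝ))
    (ℓ : V → Set (ℝ × ℝ))
    (hseg : ∀ v, ∃ x₁ x₂ : ℝ, x₁ ≤ x₂ ∧ ℓ v = Set.Icc ((x₁, P v)) ((x₂, P v)))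
    (hinter : ∀ u v : V, u ≠ v → (ℓ u ∩ ℓ v).Subsingleton)
    (hedge : ∀ u v : V, G.Adj u v → ∀ z : ℝ × ℝ, ℓ u = {z} → z ∈ ℓ v)
    (hs : ¬ (ℓ s).Subsingleton) (ht : ¬ (ℓ t).Subsingleton) :
    ∀ v, ¬ (ℓ v).Subsingleton :=
  three_connected_lines_nondegenerate_general G h3 s t P hPs hPt ℓ hseg hinter hedge
end
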